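/- arXiv:0803.2873 — 4 statements merged into one kernel-verified Lean document; each statement's English description precedes it below -/
import Mathlib

section
/- Let m ≥ 3 be an integer, δ ∈ ℝ and j ∈ ℕ; set λ_j := j(m−2+j) and δ_j := m/2 + j. Let v, g : ℝ → ℝ with v twice continuously differentiable and g continuous, satisfying the ODE d/ds ( v′(s) e^{(m−2)s} ) = (λ_j v(s) − g(s)) e^{(m−2)s} for all s. Then for every smooth compactly supported function χ : ℝ → ℝ, (δ_j − δ)(δ_j + δ − 2) · ∫ (χ v)² dμ_δ ≤ ∫ [ (χ′)² + (1−δ)·(χ²)′ ] v² dμ_δ + ∫ χ² v g dμ_δ. -/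
open MeasureTheory Real Filter Set in
lemma aux_integral_deriv_zero {F F' : ℝ → ℝ}
    (hF : ∀ s, HasDerivAt F (F' s) s) (hF'c : Continuous F')
    (hsupp : HasCompactSupport F) : ∫ s : ℝ, F' s = 0 := by
  have hF'supp : HasCompactSupport F' := by
    have : F' = deriv F := funext fun s => ((hF s).deriv).symm
    rw [this]; exact hsupp.deriv
  have hint : Integrable F' := hF'c.integrable_of_hasCompactSupport hF'supp
  have htop : Tendsto F atTop (nhds 0) := by
    have h := hsupp
    rw [hasCompactSupport_iff_eventuallyEq, Filter.coclosedCompact_eq_cocompact] at h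
    exact h.filter_mono _root_.atTop_le_cocompact |>.tendsto
  have hbot : Tendsto F atBot (nhds 0) := by
    have h := hsupp
    rw [hasCompactSupport_iff_eventuallyEq, Filter.coclosedCompact_eq_cocompact] at h
    exact h.filter_mono _root_.atBot_le_cocompact |>.tendsto
  have h1 : ∫ x in Iic (0:ℝ), F' x = F 0 - 0 :=
    integral_Iic_of_hasDerivAt_of_tendsto' (fun x _ => hF x) hint.integrableOn hbot
  have h2 : ∫ x in Ioi (0:ℝ), F' x = 0 - F 0 :=
    integral_Ioi_of_hasDerivAt_of_tendsto' (fun x _ => hF x) hint.integrableOn htop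
  rw [← intervalIntegral.integral_Iic_add_Ioi hint.integrableOn hint.integrableOn, h1, h2]
  ring


open MeasureTheory Real

/-- The integration-by-parts inequality for the radial equation in the proof of the
weighted a priori estimate (Lemma 2.2 of the paper).  Here `λ_j = j(m-2+j)`,
`δ_j = m/2 + j`, `μ_δ = e^{(m-2δ)s} ds`, and `v` solves
`(v' e^{(m-2)s})' = (λ_j v - g) e^{(m-2)s}`. -/
theorem radial_mode_estimate (m : ℕ) (hm : 3 ≤ m) (δ : ℝ) (j : ℕ)
    (v g : ℝ → ℝ) (hv : ContDiff ℝ 2 v) (hg : Continuous g)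
    (hode : ∀ s : ℝ,
      HasDerivAt (fun s => deriv v s * Real.exp (((m : ℝ) - 2) * s))
        (((j * ((m : ℝ) - 2 + j)) * v s - g s) * Real.exp (((m : ℝ) - 2) * s)) s)
    (χ : ℝ → ℝ) (hχ : ContDiff ℝ (⊤ : ℕ∞) χ) (hχsupp : HasCompactSupport χ) :
    (((m : ℝ) / 2 + j) - δ) * (((m : ℝ) / 2 + j) + δ - 2) *
        ∫ s : ℝ, (χ s * v s) ^ 2 * Real.exp (((m : ℝ) - 2 * δ) * s) ≤
      (∫ s : ℝ, ((deriv χ s) ^ 2 + (1 - δ) * deriv (fun s => χ s ^ 2) s) * v s ^ 2 *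
          Real.exp (((m : ℝ) - 2 * δ) * s)) +
        ∫ s : ℝ, χ s ^ 2 * v s * g s * Real.exp (((m : ℝ) - 2 * δ) * s) := by
  have hvd : Differentiable ℝ v := hv.differentiable (by norm_num)
  have hv'c : Continuous (deriv v) := hv.continuous_deriv (by norm_num)
  have hχd : Differentiable ℝ χ := hχ.differentiable (by simp)
  have hχ'c : Continuous (deriv χ) := hχ.continuous_deriv (by simp)
  have hEd : ∀ s : ℝ, HasDerivAt (fun s : ℝ => Real.exp (((m : ℝ) - 2 * δ) * s))
      (((m : ℝ) - 2 * δ) * Real.exp (((m : ℝ) - 2 * δ) * s)) s := by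
    intro s
    simpa [mul_comm] using (((hasDerivAt_id s).const_mul ((m : ℝ) - 2 * δ))).exp
  have hv'' : ∀ s, HasDerivAt (deriv v)
      ((j : ℝ) * ((m : ℝ) - 2 + j) * v s - g s - ((m : ℝ) - 2) * deriv v s) s := by
    intro s
    have h2 : HasDerivAt (fun s : ℝ => Real.exp (-(((m : ℝ) - 2) * s)))
        (-((m : ℝ) - 2) * Real.exp (-(((m : ℝ) - 2) * s))) s := by
      simpa [mul_comm, neg_mul] using (((hasDerivAt_id s).const_mul ((m : ℝ) - 2)).neg).exp
    have h3 := (hode s).mul h2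
    simp only [Pi.mul_def] at h3
    have heq : (fun s => deriv v s * Real.exp (((m : ℝ) - 2) * s) *
        Real.exp (-(((m : ℝ) - 2) * s))) = deriv v := by
      funext t; rw [mul_assoc, ← Real.exp_add]; simp
    rw [heq] at h3
    refine h3.congr_deriv ?_
    have he : Real.exp (((m : ℝ) - 2) * s) * Real.exp (-(((m : ℝ) - 2) * s)) = 1 := by
      rw [← Real.exp_add]; simp
    linear_combination ((j : ℝ) * ((m : ℝ) - 2 + j) * v s - g s
      - ((m : ℝ) - 2) * deriv v s) * he
  have hFderiv : ∀ s, HasDerivAt (fun s => -(χ s ^ 2 * v s * deriv v s * Real.exp (((m : ℝ) - 2 * δ) * s)) - ((m : ℝ) - 2) / 2 * ((χ s * v s) ^ 2 * Real.exp (((m : ℝ) - 2 * δ) * s)))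
      (((deriv χ s) ^ 2 + (1 - δ) * (2 * χ s * deriv χ s)) * v s ^ 2 * Real.exp (((m : ℝ) - 2 * δ) * s) + χ s ^ 2 * v s * g s * Real.exp (((m : ℝ) - 2 * δ) * s) - ((((m : ℝ) / 2 + j) - δ) * (((m : ℝ) / 2 + j) + δ - 2)) * ((χ s * v s) ^ 2 * Real.exp (((m : ℝ) - 2 * δ) * s)) - (deriv χ s * v s + χ s * deriv v s + (((m : ℝ) - 2 * δ) / 2) * (χ s * v s)) ^ 2 * Real.exp (((m : ℝ) - 2 * δ) * s)) s := by
    intro s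
    have hc : HasDerivAt χ (deriv χ s) s := (hχd s).hasDerivAt
    have hu : HasDerivAt v (deriv v s) s := (hvd s).hasDerivAt
    have h1 : HasDerivAt (fun s => χ s ^ 2 * v s * deriv v s * Real.exp (((m : ℝ) - 2 * δ) * s))
        ((((2 * χ s ^ 1 * deriv χ s) * v s + χ s ^ 2 * deriv v s) * deriv v s
          + χ s ^ 2 * v s * ((j : ℝ) * ((m : ℝ) - 2 + j) * v s - g s - ((m : ℝ) - 2) * deriv v s))
            * Real.exp (((m : ℝ) - 2 * δ) * s)
          + χ s ^ 2 * v s * deriv v s * (((m : ℝ) - 2 * δ) * Real.exp (((m : ℝ) - 2 * δ) * s))) s :=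
      (((hc.pow 2).mul hu).mul (hv'' s)).mul (hEd s)
    have h2 : HasDerivAt (fun s => (χ s * v s) ^ 2 * Real.exp (((m : ℝ) - 2 * δ) * s))
        ((2 * (χ s * v s) ^ 1 * (deriv χ s * v s + χ s * deriv v s)) * Real.exp (((m : ℝ) - 2 * δ) * s)
          + (χ s * v s) ^ 2 * (((m : ℝ) - 2 * δ) * Real.exp (((m : ℝ) - 2 * δ) * s))) s :=
      (((hc.mul hu).pow 2)).mul (hEd s)
    have h3 := (h1.neg).sub (h2.const_mul (((m : ℝ) - 2) / 2))
    refine h3.congr_deriv ?_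
    ring
  have hFsupp : HasCompactSupport (fun s => -(χ s ^ 2 * v s * deriv v s * Real.exp (((m : ℝ) - 2 * δ) * s)) - ((m : ℝ) - 2) / 2 * ((χ s * v s) ^ 2 * Real.exp (((m : ℝ) - 2 * δ) * s))) := by
    have : (fun s => -(χ s ^ 2 * v s * deriv v s * Real.exp (((m : ℝ) - 2 * δ) * s)) - ((m : ℝ) - 2) / 2 * ((χ s * v s) ^ 2 * Real.exp (((m : ℝ) - 2 * δ) * s))) = fun s => χ s * (-(χ s * v s * deriv v s * Real.exp (((m : ℝ) - 2 * δ) * s))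
        - ((m : ℝ) - 2) / 2 * (χ s * v s ^ 2) * Real.exp (((m : ℝ) - 2 * δ) * s)) := by
      funext s; ring
    rw [this]
    exact hχsupp.mul_right
  have hEc : Continuous (fun s : ℝ => Real.exp (((m : ℝ) - 2 * δ) * s)) :=
    Real.continuous_exp.comp (continuous_const.mul continuous_id)
  have hc1 : Continuous (fun s => ((deriv χ s) ^ 2 + (1 - δ) * (2 * χ s * deriv χ s)) * v s ^ 2 * Real.exp (((m : ℝ) - 2 * δ) * s)) :=
    (((hχ'c.pow 2).add (continuous_const.mul ((continuous_const.mul hχd.continuous).mul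
      hχ'c))).mul (hvd.continuous.pow 2)).mul hEc
  have hc2 : Continuous (fun s => χ s ^ 2 * v s * g s * Real.exp (((m : ℝ) - 2 * δ) * s)) :=
    (((hχd.continuous.pow 2).mul hvd.continuous).mul hg).mul hEc
  have hc3 : Continuous (fun s => (χ s * v s) ^ 2 * Real.exp (((m : ℝ) - 2 * δ) * s)) :=
    ((hχd.continuous.mul hvd.continuous).pow 2).mul hEc
  have hc4 : Continuous (fun s => (deriv χ s * v s + χ s * deriv v s + (((m : ℝ) - 2 * δ) / 2) * (χ s * v s)) ^ 2 * Real.exp (((m : ℝ) - 2 * δ) * s)) :=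
    ((((hχ'c.mul hvd.continuous).add (hχd.continuous.mul hv'c)).add
      (continuous_const.mul (hχd.continuous.mul hvd.continuous))).pow 2).mul hEc
  have hφc : Continuous (fun s => ((deriv χ s) ^ 2 + (1 - δ) * (2 * χ s * deriv χ s)) * v s ^ 2 * Real.exp (((m : ℝ) - 2 * δ) * s) + χ s ^ 2 * v s * g s * Real.exp (((m : ℝ) - 2 * δ) * s) - ((((m : ℝ) / 2 + j) - δ) * (((m : ℝ) / 2 + j) + δ - 2)) * ((χ s * v s) ^ 2 * Real.exp (((m : ℝ) - 2 * δ) * s)) - (deriv χ s * v s + χ s * deriv v s + (((m : ℝ) - 2 * δ) / 2) * (χ s * v s)) ^ 2 * Real.exp (((m : ℝ) - 2 * δ) * s)) :=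
    ((hc1.add hc2).sub (continuous_const.mul hc3)).sub hc4
  have hint : ∫ s : ℝ, (((deriv χ s) ^ 2 + (1 - δ) * (2 * χ s * deriv χ s)) * v s ^ 2 * Real.exp (((m : ℝ) - 2 * δ) * s) + χ s ^ 2 * v s * g s * Real.exp (((m : ℝ) - 2 * δ) * s) - ((((m : ℝ) / 2 + j) - δ) * (((m : ℝ) / 2 + j) + δ - 2)) * ((χ s * v s) ^ 2 * Real.exp (((m : ℝ) - 2 * δ) * s)) - (deriv χ s * v s + χ s * deriv v s + (((m : ℝ) - 2 * δ) / 2) * (χ s * v s)) ^ 2 * Real.exp (((m : ℝ) - 2 * δ) * s)) = 0 :=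
    aux_integral_deriv_zero hFderiv hφc hFsupp
  have hI1 : Integrable (fun s => ((deriv χ s) ^ 2 + (1 - δ) * (2 * χ s * deriv χ s)) * v s ^ 2 * Real.exp (((m : ℝ) - 2 * δ) * s)) := by
    refine hc1.integrable_of_hasCompactSupport ?_
    have : (fun s => ((deriv χ s) ^ 2 + (1 - δ) * (2 * χ s * deriv χ s)) * v s ^ 2 * Real.exp (((m : ℝ) - 2 * δ) * s))
        = fun s => deriv χ s * ((deriv χ s + (1 - δ) * (2 * χ s)) * v s ^ 2 * Real.exp (((m : ℝ) - 2 * δ) * s)) := by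
      funext s; ring
    rw [this]
    exact hχsupp.deriv.mul_right
  have hI2 : Integrable (fun s => χ s ^ 2 * v s * g s * Real.exp (((m : ℝ) - 2 * δ) * s)) := by
    refine hc2.integrable_of_hasCompactSupport ?_
    have : (fun s => χ s ^ 2 * v s * g s * Real.exp (((m : ℝ) - 2 * δ) * s))
        = fun s => χ s * (χ s * v s * g s * Real.exp (((m : ℝ) - 2 * δ) * s)) := by
      funext s; ring
    rw [this]; exact hχsupp.mul_right
  have hI3 : Integrable (fun s => (χ s * v s) ^ 2 * Real.exp (((m : ℝ) - 2 * δ) * s)) := by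
    refine hc3.integrable_of_hasCompactSupport ?_
    have : (fun s => (χ s * v s) ^ 2 * Real.exp (((m : ℝ) - 2 * δ) * s))
        = fun s => χ s * (χ s * v s ^ 2 * Real.exp (((m : ℝ) - 2 * δ) * s)) := by
      funext s; ring
    rw [this]; exact hχsupp.mul_right
  have hI4 : Integrable (fun s => (deriv χ s * v s + χ s * deriv v s + (((m : ℝ) - 2 * δ) / 2) * (χ s * v s)) ^ 2 * Real.exp (((m : ℝ) - 2 * δ) * s)) := by
    refine hc4.integrable_of_hasCompactSupport ?_
    have h1 : HasCompactSupport (fun s => deriv χ s * v s + χ s * (deriv v s + (((m : ℝ) - 2 * δ) / 2) * v s)) :=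
      HasCompactSupport.add hχsupp.deriv.mul_right hχsupp.mul_right
    have h2 : HasCompactSupport (fun s => (deriv χ s * v s + χ s * (deriv v s + (((m : ℝ) - 2 * δ) / 2) * v s)) *
        ((deriv χ s * v s + χ s * (deriv v s + (((m : ℝ) - 2 * δ) / 2) * v s)) * Real.exp (((m : ℝ) - 2 * δ) * s))) := h1.mul_right
    have : (fun s => (deriv χ s * v s + χ s * deriv v s + (((m : ℝ) - 2 * δ) / 2) * (χ s * v s)) ^ 2 * Real.exp (((m : ℝ) - 2 * δ) * s))
        = fun s => (deriv χ s * v s + χ s * (deriv v s + (((m : ℝ) - 2 * δ) / 2) * v s)) *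
          ((deriv χ s * v s + χ s * (deriv v s + (((m : ℝ) - 2 * δ) / 2) * v s)) * Real.exp (((m : ℝ) - 2 * δ) * s)) := by
      funext s; ring
    rw [this]; exact h2
  have h12 : Integrable (fun s => ((deriv χ s) ^ 2 + (1 - δ) * (2 * χ s * deriv χ s)) * v s ^ 2 * Real.exp (((m : ℝ) - 2 * δ) * s) + χ s ^ 2 * v s * g s * Real.exp (((m : ℝ) - 2 * δ) * s)) := hI1.add hI2
  have h123 : Integrable (fun s => ((deriv χ s) ^ 2 + (1 - δ) * (2 * χ s * deriv χ s)) * v s ^ 2 * Real.exp (((m : ℝ) - 2 * δ) * s) + χ s ^ 2 * v s * g s * Real.exp (((m : ℝ) - 2 * δ) * s) - ((((m : ℝ) / 2 + j) - δ) * (((m : ℝ) / 2 + j) + δ - 2)) * ((χ s * v s) ^ 2 * Real.exp (((m : ℝ) - 2 * δ) * s))) :=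
    h12.sub (hI3.const_mul ((((m : ℝ) / 2 + j) - δ) * (((m : ℝ) / 2 + j) + δ - 2)))
  have e4 : ∫ s : ℝ, (((deriv χ s) ^ 2 + (1 - δ) * (2 * χ s * deriv χ s)) * v s ^ 2 * Real.exp (((m : ℝ) - 2 * δ) * s) + χ s ^ 2 * v s * g s * Real.exp (((m : ℝ) - 2 * δ) * s) - ((((m : ℝ) / 2 + j) - δ) * (((m : ℝ) / 2 + j) + δ - 2)) * ((χ s * v s) ^ 2 * Real.exp (((m : ℝ) - 2 * δ) * s)) - (deriv χ s * v s + χ s * deriv v s + (((m : ℝ) - 2 * δ) / 2) * (χ s * v s)) ^ 2 * Real.exp (((m : ℝ) - 2 * δ) * s))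
      = (∫ s : ℝ, (((deriv χ s) ^ 2 + (1 - δ) * (2 * χ s * deriv χ s)) * v s ^ 2 * Real.exp (((m : ℝ) - 2 * δ) * s) + χ s ^ 2 * v s * g s * Real.exp (((m : ℝ) - 2 * δ) * s) - ((((m : ℝ) / 2 + j) - δ) * (((m : ℝ) / 2 + j) + δ - 2)) * ((χ s * v s) ^ 2 * Real.exp (((m : ℝ) - 2 * δ) * s)))) - ∫ s : ℝ, (deriv χ s * v s + χ s * deriv v s + (((m : ℝ) - 2 * δ) / 2) * (χ s * v s)) ^ 2 * Real.exp (((m : ℝ) - 2 * δ) * s) :=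
    integral_sub h123 hI4
  have e3 : ∫ s : ℝ, (((deriv χ s) ^ 2 + (1 - δ) * (2 * χ s * deriv χ s)) * v s ^ 2 * Real.exp (((m : ℝ) - 2 * δ) * s) + χ s ^ 2 * v s * g s * Real.exp (((m : ℝ) - 2 * δ) * s) - ((((m : ℝ) / 2 + j) - δ) * (((m : ℝ) / 2 + j) + δ - 2)) * ((χ s * v s) ^ 2 * Real.exp (((m : ℝ) - 2 * δ) * s)))
      = (∫ s : ℝ, (((deriv χ s) ^ 2 + (1 - δ) * (2 * χ s * deriv χ s)) * v s ^ 2 * Real.exp (((m : ℝ) - 2 * δ) * s) + χ s ^ 2 * v s * g s * Real.exp (((m : ℝ) - 2 * δ) * s))) - ∫ s : ℝ, ((((m : ℝ) / 2 + j) - δ) * (((m : ℝ) / 2 + j) + δ - 2)) * ((χ s * v s) ^ 2 * Real.exp (((m : ℝ) - 2 * δ) * s)) :=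
    integral_sub h12 (hI3.const_mul ((((m : ℝ) / 2 + j) - δ) * (((m : ℝ) / 2 + j) + δ - 2)))
  have e2 : ∫ s : ℝ, (((deriv χ s) ^ 2 + (1 - δ) * (2 * χ s * deriv χ s)) * v s ^ 2 * Real.exp (((m : ℝ) - 2 * δ) * s) + χ s ^ 2 * v s * g s * Real.exp (((m : ℝ) - 2 * δ) * s)) = (∫ s : ℝ, ((deriv χ s) ^ 2 + (1 - δ) * (2 * χ s * deriv χ s)) * v s ^ 2 * Real.exp (((m : ℝ) - 2 * δ) * s)) + ∫ s : ℝ, χ s ^ 2 * v s * g s * Real.exp (((m : ℝ) - 2 * δ) * s) :=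
    integral_add hI1 hI2
  have e1 : ∫ s : ℝ, ((((m : ℝ) / 2 + j) - δ) * (((m : ℝ) / 2 + j) + δ - 2)) * ((χ s * v s) ^ 2 * Real.exp (((m : ℝ) - 2 * δ) * s)) = ((((m : ℝ) / 2 + j) - δ) * (((m : ℝ) / 2 + j) + δ - 2)) * ∫ s : ℝ, (χ s * v s) ^ 2 * Real.exp (((m : ℝ) - 2 * δ) * s) :=
    integral_const_mul _ _
  have hpos : 0 ≤ ∫ s : ℝ, (deriv χ s * v s + χ s * deriv v s + (((m : ℝ) - 2 * δ) / 2) * (χ s * v s)) ^ 2 * Real.exp (((m : ℝ) - 2 * δ) * s) :=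
    integral_nonneg fun s => mul_nonneg (sq_nonneg _) (Real.exp_pos _).le
  have hgoal1 : (∫ s : ℝ, ((deriv χ s) ^ 2 + (1 - δ) * deriv (fun s => χ s ^ 2) s) * v s ^ 2 *
      Real.exp (((m : ℝ) - 2 * δ) * s)) = ∫ s : ℝ, ((deriv χ s) ^ 2 + (1 - δ) * (2 * χ s * deriv χ s)) * v s ^ 2 * Real.exp (((m : ℝ) - 2 * δ) * s) := by
    congr 1
    funext s
    have hd2 : deriv (fun s => χ s ^ 2) s = 2 * χ s * deriv χ s := by
      have := ((hχd s).hasDerivAt.pow 2).deriv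
      simpa [pow_one, Pi.pow_def] using this
    rw [hd2]
  rw [hgoal1]
  linarith [hint, e4, e3, e2, e1, hpos]
end

section
/- Let m, δ, ν ∈ ℝ with m − 2δ + 2ν < 0, let s₀ ∈ ℝ, and let g : [s₀, ∞) → ℝ be measurable with ∫_{s₀}^∞ g(s)² e^{(m−2δ)s} ds < ∞. Define w(s) := ∫_{s₀}^s e^{ν(s−σ)} g(σ) dσ for s ≥ s₀. Then ∫_{s₀}^∞ w(s)² e^{(m−2δ)s} ds ≤ (4/(m−2δ+2ν)²) · ∫_{s₀}^∞ g(s)² e^{(m−2δ)s} ds. -/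
/-!
With `a = m - 2δ`, the function `e^{a s / 2} w(s)` is the causal convolution of
`h(σ) = e^{a σ / 2} g(σ)` with `k(t) = e^{(ν + a/2) t} 1_{t ≥ 0}`, and `k` is integrable with
`∫ k = 2 / |m - 2δ + 2ν|` because `ν + a/2 < 0`. Young's inequality `‖k ⋆ h‖₂ ≤ ‖k‖₁ ‖h‖₂`,
obtained from Cauchy–Schwarz and Tonelli (Schur's test), gives the constant `4 / (m - 2δ + 2ν)²`.
-/

open MeasureTheory Real Set
open scoped ENNReal

theorem ENNReal.lintegral_mul_sq_le {α : Type*} [MeasurableSpace α] {μ : Measure α}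
    {K f : α → ℝ≥0∞} (hK : AEMeasurable K μ) (hf : AEMeasurable f μ) :
    (∫⁻ x, K x * f x ∂μ) ^ 2 ≤ (∫⁻ x, K x ∂μ) * ∫⁻ x, K x * f x ^ 2 ∂μ := by
  have hsplit : ∀ x, K x * f x = K x ^ (2⁻¹ : ℝ) * (K x * f x ^ 2) ^ (2⁻¹ : ℝ) := fun x => by
    rw [ENNReal.mul_rpow_of_nonneg _ _ (by norm_num), ← mul_assoc,
      ← ENNReal.rpow_add_of_nonneg _ _ (by norm_num) (by norm_num), ← ENNReal.rpow_natCast,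
      ← ENNReal.rpow_mul]
    norm_num
  have hCS : ∫⁻ x, K x * f x ∂μ
      ≤ (∫⁻ x, K x ∂μ) ^ (2⁻¹ : ℝ) * (∫⁻ x, K x * f x ^ 2 ∂μ) ^ (2⁻¹ : ℝ) := by
    rw [lintegral_congr hsplit]
    exact lintegral_mul_norm_pow_le (g := fun x => K x * f x ^ 2) hK (hK.mul (hf.pow_const 2))
      (by norm_num) (by norm_num) (by norm_num)
  calc (∫⁻ x, K x * f x ∂μ) ^ 2
      ≤ ((∫⁻ x, K x ∂μ) ^ (2⁻¹ : ℝ) * (∫⁻ x, K x * f x ^ 2 ∂μ) ^ (2⁻¹ : ℝ)) ^ 2 := by gcongr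
    _ = (∫⁻ x, K x ∂μ) * ∫⁻ x, K x * f x ^ 2 ∂μ := by
      rw [← ENNReal.mul_rpow_of_nonneg _ _ (by norm_num), ← ENNReal.rpow_natCast,
        ← ENNReal.rpow_mul]
      norm_num

theorem lintegral_sq_lintegral_mul_le_of_schur {α β : Type*} [MeasurableSpace α]
    [MeasurableSpace β] {μ : Measure α} {ν : Measure β} [SFinite μ] [SFinite ν]
    {K : α → β → ℝ≥0∞} (hK : Measurable (Function.uncurry K)) {f : β → ℝ≥0∞} (hf : Measurable f)
    {A B : ℝ≥0∞} (hA : ∀ x, ∫⁻ y, K x y ∂ν ≤ A) (hB : ∀ y, ∫⁻ x, K x y ∂μ ≤ B) :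
    ∫⁻ x, (∫⁻ y, K x y * f y ∂ν) ^ 2 ∂μ ≤ A * B * ∫⁻ y, f y ^ 2 ∂ν := by
  have hKf : Measurable (Function.uncurry fun x y => K x y * f y ^ 2) :=
    hK.mul ((hf.pow_const 2).comp measurable_snd)
  have hKf_int : Measurable fun x => ∫⁻ y, K x y * f y ^ 2 ∂ν := hKf.lintegral_prod_right'
  calc ∫⁻ x, (∫⁻ y, K x y * f y ∂ν) ^ 2 ∂μ
      ≤ ∫⁻ x, A * ∫⁻ y, K x y * f y ^ 2 ∂ν ∂μ := lintegral_mono fun x =>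
        (ENNReal.lintegral_mul_sq_le (hK.comp measurable_prodMk_left).aemeasurable
          hf.aemeasurable).trans (mul_le_mul_left (hA x) _)
    _ = A * ∫⁻ y, (∫⁻ x, K x y ∂μ) * f y ^ 2 ∂ν := by
      rw [lintegral_const_mul _ hKf_int, lintegral_lintegral_swap hKf.aemeasurable]
      exact congrArg _ (lintegral_congr fun y =>
        lintegral_mul_const _ (hK.comp measurable_prodMk_right))
    _ ≤ A * ∫⁻ y, B * f y ^ 2 ∂ν := by gcongr with y; exact hB y
    _ = A * B * ∫⁻ y, f y ^ 2 ∂ν := by rw [lintegral_const_mul _ (hf.pow_const 2), mul_assoc]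

theorem lintegral_sq_lintegral_mul_sub_le {G : Type*} [AddGroup G] [MeasurableSpace G]
    [MeasurableSub₂ G] [MeasurableAdd G] [MeasurableNeg G] {μ : Measure G} [SFinite μ]
    [μ.IsAddLeftInvariant] [μ.IsAddRightInvariant] [μ.IsNegInvariant]
    {k f : G → ℝ≥0∞} (hk : Measurable k) (hf : Measurable f) (s t : Set G) :
    ∫⁻ x in s, (∫⁻ y in t, k (x - y) * f y ∂μ) ^ 2 ∂μ ≤
      (∫⁻ x, k x ∂μ) ^ 2 * ∫⁻ y in t, f y ^ 2 ∂μ := by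
  rw [sq]
  refine lintegral_sq_lintegral_mul_le_of_schur
    (show Measurable (Function.uncurry fun x y => k (x - y)) from hk.comp measurable_sub) hf
    (fun x => ?_) (fun y => ?_)
  · exact (setLIntegral_le_lintegral _ _).trans (lintegral_sub_left_eq_self k x).le
  · exact (setLIntegral_le_lintegral _ _).trans (lintegral_sub_right_eq_self k y).le

noncomputable def causalExpKernel (c : ℝ) : ℝ → ℝ≥0∞ :=
  (Ici 0).indicator fun t => ENNReal.ofReal (exp (c * t))

theorem measurable_causalExpKernel (c : ℝ) : Measurable (causalExpKernel c) :=
  (ENNReal.measurable_ofReal.comp (by fun_prop)).indicator measurableSet_Ici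

theorem lintegral_causalExpKernel {c : ℝ} (hc : c < 0) :
    ∫⁻ t, causalExpKernel c t = ENNReal.ofReal (-1 / c) := by
  rw [causalExpKernel, lintegral_indicator measurableSet_Ici, ← restrict_Ioi_eq_restrict_Ici,
    ← ofReal_integral_eq_lintegral_ofReal (integrableOn_exp_mul_Ioi hc 0)
      (ae_of_all _ fun t => (exp_pos _).le), integral_exp_mul_Ioi hc, mul_zero, exp_zero]

theorem causalExpKernel_sub (c s σ : ℝ) :
    causalExpKernel c (s - σ) =
      (Iic s).indicator (fun σ => ENNReal.ofReal (exp (c * (s - σ)))) σ := by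
  simp [causalExpKernel, indicator]

theorem ENNReal.ofReal_sq_eq_enorm_sq (y : ℝ) : ENNReal.ofReal (y ^ 2) = ‖y‖ₑ ^ 2 := by
  rw [Real.enorm_eq_ofReal_abs, ← ENNReal.ofReal_pow (abs_nonneg y), sq_abs]

theorem Real.exp_half_sq (x : ℝ) : exp (x / 2) ^ 2 = exp x := by
  rw [← exp_nat_mul]; ring_nf

theorem ofReal_volterra_sq_mul_exp_le (a ν : ℝ) (g : ℝ → ℝ) {s₀ s : ℝ} (hs : s₀ ≤ s) :
    ENNReal.ofReal ((∫ σ in s₀..s, exp (ν * (s - σ)) * g σ) ^ 2 * exp (a * s)) ≤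
      (∫⁻ σ in Ioi s₀, causalExpKernel (ν + a / 2) (s - σ) * ‖g σ * exp (a * σ / 2)‖ₑ) ^ 2 := by
  have hshift : (∫ σ in s₀..s, exp (ν * (s - σ)) * g σ) * exp (a * s / 2) =
      ∫ σ in s₀..s, exp ((ν + a / 2) * (s - σ)) * (g σ * exp (a * σ / 2)) := by
    rw [← intervalIntegral.integral_mul_const]
    congr 1 with σ
    have hexp : exp (ν * (s - σ)) * exp (a * s / 2) =
        exp ((ν + a / 2) * (s - σ)) * exp (a * σ / 2) := by
      rw [← exp_add, ← exp_add]; ring_nf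
    linear_combination g σ * hexp
  have hkernel : ∀ σ, causalExpKernel (ν + a / 2) (s - σ) * ‖g σ * exp (a * σ / 2)‖ₑ =
      (Iic s).indicator (fun σ => ‖exp ((ν + a / 2) * (s - σ)) * (g σ * exp (a * σ / 2))‖ₑ) σ := by
    intro σ
    rw [causalExpKernel_sub, indicator_apply, indicator_apply]
    split_ifs
    · rw [enorm_mul (exp _), Real.enorm_of_nonneg (exp_pos _).le]
    · rw [zero_mul]
  calc ENNReal.ofReal ((∫ σ in s₀..s, exp (ν * (s - σ)) * g σ) ^ 2 * exp (a * s))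
      = ‖∫ σ in s₀..s, exp ((ν + a / 2) * (s - σ)) * (g σ * exp (a * σ / 2))‖ₑ ^ 2 := by
        rw [← hshift, ← ENNReal.ofReal_sq_eq_enorm_sq, mul_pow, exp_half_sq]
    _ ≤ (∫⁻ σ in Ioc s₀ s, ‖exp ((ν + a / 2) * (s - σ)) * (g σ * exp (a * σ / 2))‖ₑ) ^ 2 := by
        rw [intervalIntegral.integral_of_le hs]
        gcongr
        exact enorm_integral_le_lintegral_enorm _
    _ = _ := by
        rw [lintegral_congr hkernel, lintegral_indicator measurableSet_Iic,
          Measure.restrict_restrict measurableSet_Iic, inter_comm, Ioi_inter_Iic]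

theorem volterra_weighted_bound_from_below_general (m δ ν : ℝ) (h : m - 2 * δ + 2 * ν < 0)
    (s₀ : ℝ) (g : ℝ → ℝ) (hg : Measurable g) :
    ∫⁻ s in Ici s₀,
        ENNReal.ofReal ((∫ σ in s₀..s, Real.exp (ν * (s - σ)) * g σ) ^ 2 *
          Real.exp ((m - 2 * δ) * s)) ≤
      ENNReal.ofReal (4 / (m - 2 * δ + 2 * ν) ^ 2) *
        ∫⁻ s in Ici s₀, ENNReal.ofReal (g s ^ 2 * Real.exp ((m - 2 * δ) * s)) := by
  set a := m - 2 * δ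
  have hc : ν + a / 2 < 0 := by linarith
  have hweight : ∀ σ, ‖g σ * exp (a * σ / 2)‖ₑ ^ 2 = ENNReal.ofReal (g σ ^ 2 * exp (a * σ)) :=
    fun σ => by rw [← ENNReal.ofReal_sq_eq_enorm_sq, mul_pow, exp_half_sq]
  calc _ ≤ ∫⁻ s in Ici s₀,
        (∫⁻ σ in Ioi s₀, causalExpKernel (ν + a / 2) (s - σ) * ‖g σ * exp (a * σ / 2)‖ₑ) ^ 2 :=
        setLIntegral_mono' measurableSet_Ici fun s hs => ofReal_volterra_sq_mul_exp_le a ν g hs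
    _ ≤ ENNReal.ofReal (-1 / (ν + a / 2)) ^ 2 *
          ∫⁻ σ in Ioi s₀, ENNReal.ofReal (g σ ^ 2 * exp (a * σ)) := by
        rw [← lintegral_causalExpKernel hc]
        simp_rw [← hweight]
        exact lintegral_sq_lintegral_mul_sub_le (measurable_causalExpKernel _)
          (by fun_prop) _ _
    _ ≤ _ := by
        rw [← ENNReal.ofReal_pow (div_nonneg_of_nonpos (by norm_num) hc.le)]
        refine mul_le_mul' (le_of_eq (congrArg _ ?_)) (lintegral_mono_set Ioi_subset_Ici_self)
        field_simp
        ring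

/-- Weighted `L²` bound for the Volterra-type solution `w(s) = ∫_{s₀}^s e^{ν(s-σ)} g(σ) dσ`
of `w' = ν w + g`, when `m - 2δ + 2ν < 0` (proof of Lemma 2.2 of the paper). -/
theorem volterra_weighted_bound_from_below (m δ ν : ℝ) (h : m - 2 * δ + 2 * ν < 0)
    (s₀ : ℝ) (g : ℝ → ℝ) (hg : Measurable g)
    (hfin : ∫⁻ s in Ici s₀, ENNReal.ofReal (g s ^ 2 * Real.exp ((m - 2 * δ) * s)) < ⊤) :
    ∫⁻ s in Ici s₀,
        ENNReal.ofReal ((∫ σ in s₀..s, Real.exp (ν * (s - σ)) * g σ) ^ 2 *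
          Real.exp ((m - 2 * δ) * s)) ≤
      ENNReal.ofReal (4 / (m - 2 * δ + 2 * ν) ^ 2) *
        ∫⁻ s in Ici s₀, ENNReal.ofReal (g s ^ 2 * Real.exp ((m - 2 * δ) * s)) :=
  volterra_weighted_bound_from_below_general m δ ν h s₀ g hg
end

section
/- Let m, δ, ν ∈ ℝ with m − 2δ + 2ν > 0, let s₀ ∈ ℝ, and let g : [s₀, ∞) → ℝ be measurable with ∫_{s₀}^∞ g(s)² e^{(m−2δ)s} ds < ∞. Then for every s ≥ s₀ the integral w(s) := ∫_s^∞ e^{ν(s−σ)} g(σ) dσ converges absolutely, and ∫_{s₀}^∞ w(s)² e^{(m−2δ)s} ds ≤ (4/(m−2δ+2ν)²) · ∫_{s₀}^∞ g(s)² e^{(m−2δ)s} ds. -/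
/-!
Write `a = m - 2δ`, `β = a/2 + ν > 0` and `φ(σ) = |g(σ)| e^{aσ/2}`. The kernel identity
`e^{as/2} e^{ν(s-σ)} = e^{-β(σ-s)} e^{aσ/2}` gives `e^{as/2} |w(s)| ≤ ∫_s^∞ e^{-β(σ-s)} φ(σ) dσ`,
a convolution of `φ` with the one-sided exponential kernel, whose mass is `1/β` in either
variable. The Schur test then bounds this operator on `L²` by `1/β`, whence the constant
`1/β² = 4/(a + 2ν)²`; the same Cauchy–Schwarz step shows the integral defining `w` converges.
-/

open MeasureTheory Real Set
open scoped ENNReal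

theorem sq_lintegral_mul_le {α : Type*} [MeasurableSpace α] (μ : Measure α)
    {k φ : α → ℝ≥0∞} (hk : AEMeasurable k μ) (hφ : AEMeasurable φ μ) :
    (∫⁻ x, k x * φ x ∂μ) ^ 2 ≤ (∫⁻ x, k x ∂μ) * ∫⁻ x, k x * φ x ^ 2 ∂μ := by
  set r : α → ℝ≥0∞ := fun x => k x ^ (2⁻¹ : ℝ)
  have hr : ∀ x, r x ^ (2 : ℝ) = k x := fun x => by
    simp only [r, ← ENNReal.rpow_mul]; norm_num
  have hsplit : ∀ x, k x * φ x = (r * (r * φ)) x := fun x => by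
    simp only [Pi.mul_apply, ← mul_assoc, ← sq, ← ENNReal.rpow_two, hr]
  have hrφ : ∀ x, (r * φ) x ^ (2 : ℝ) = k x * φ x ^ 2 := fun x => by
    simp only [Pi.mul_apply, ENNReal.mul_rpow_of_nonneg _ _ zero_le_two, hr, ENNReal.rpow_two]
  have hr_meas : AEMeasurable r μ := hk.pow_const _
  have holder := ENNReal.lintegral_mul_le_Lp_mul_Lq μ .two_two hr_meas (hr_meas.mul hφ)
  simp only [hr, hrφ, ← hsplit] at holder
  calc (∫⁻ x, k x * φ x ∂μ) ^ 2
      ≤ ((∫⁻ x, k x ∂μ) ^ (1 / 2 : ℝ) * (∫⁻ x, k x * φ x ^ 2 ∂μ) ^ (1 / 2 : ℝ)) ^ 2 := by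
        gcongr
    _ = (∫⁻ x, k x ∂μ) * ∫⁻ x, k x * φ x ^ 2 ∂μ := by
        rw [mul_pow, ← ENNReal.rpow_two, ← ENNReal.rpow_two, ← ENNReal.rpow_mul,
          ← ENNReal.rpow_mul]
        norm_num

/-- The Schur test for an integral operator with nonnegative kernel `K`. -/
theorem lintegral_sq_lintegral_mul_le {α β : Type*} [MeasurableSpace α] [MeasurableSpace β]
    {μ : Measure α} {ν : Measure β} [SFinite μ] [SFinite ν] {K : α → β → ℝ≥0∞}
    (hK : Measurable (Function.uncurry K)) {φ : β → ℝ≥0∞} (hφ : Measurable φ) {A B : ℝ≥0∞}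
    (hA : ∀ x, ∫⁻ y, K x y ∂ν ≤ A) (hB : ∀ y, ∫⁻ x, K x y ∂μ ≤ B) :
    ∫⁻ x, (∫⁻ y, K x y * φ y ∂ν) ^ 2 ∂μ ≤ A * B * ∫⁻ y, φ y ^ 2 ∂ν := by
  have hKx : ∀ x, Measurable (K x) := fun x => hK.of_uncurry_left
  have hKφ : Measurable (Function.uncurry fun x y => K x y * φ y ^ 2) :=
    hK.mul ((hφ.comp measurable_snd).pow_const 2)
  calc ∫⁻ x, (∫⁻ y, K x y * φ y ∂ν) ^ 2 ∂μ
      ≤ ∫⁻ x, A * ∫⁻ y, K x y * φ y ^ 2 ∂ν ∂μ := lintegral_mono fun x =>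
        (sq_lintegral_mul_le ν (hKx x).aemeasurable hφ.aemeasurable).trans
          (mul_le_mul_left (hA x) _)
    _ = A * ∫⁻ x, ∫⁻ y, K x y * φ y ^ 2 ∂ν ∂μ :=
        lintegral_const_mul'' _ hKφ.lintegral_prod_right'.aemeasurable
    _ = A * ∫⁻ y, (∫⁻ x, K x y ∂μ) * φ y ^ 2 ∂ν := by
        rw [lintegral_lintegral_swap hKφ.aemeasurable]
        simp_rw [lintegral_mul_const'' _ (hK.of_uncurry_right).aemeasurable]
    _ ≤ A * ∫⁻ y, B * φ y ^ 2 ∂ν := by gcongr with y; exact hB y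
    _ = A * B * ∫⁻ y, φ y ^ 2 ∂ν := by
        rw [lintegral_const_mul'' _ (hφ.pow_const 2).aemeasurable, mul_assoc]

noncomputable def expDecayKernel (β : ℝ) : ℝ → ℝ≥0∞ :=
  (Ici 0).indicator fun t => ENNReal.ofReal (exp (-(β * t)))

theorem measurable_expDecayKernel (β : ℝ) : Measurable (expDecayKernel β) :=
  Measurable.indicator (by fun_prop) measurableSet_Ici

theorem expDecayKernel_le_one {β : ℝ} (hβ : 0 ≤ β) (t : ℝ) : expDecayKernel β t ≤ 1 :=
  indicator_apply_le' (fun ht => ENNReal.ofReal_le_one.2 <| exp_le_one_iff.2 <| by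
    simpa using mul_nonneg hβ (mem_Ici.1 ht)) fun _ => zero_le_one

theorem lintegral_expDecayKernel {β : ℝ} (hβ : 0 < β) :
    ∫⁻ t, expDecayKernel β t = ENNReal.ofReal β⁻¹ := by
  have hint : IntegrableOn (fun t => exp (-(β * t))) (Ioi 0) := by
    simpa using exp_neg_integrableOn_Ioi 0 hβ
  rw [expDecayKernel, lintegral_indicator measurableSet_Ici,
    ← Measure.restrict_congr_set Ioi_ae_eq_Ici,
    ← ofReal_integral_eq_lintegral_ofReal hint (ae_of_all _ fun _ => (exp_pos _).le)]
  simpa [← neg_mul] using congrArg ENNReal.ofReal (integral_exp_mul_Ioi (neg_lt_zero.2 hβ) 0)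

theorem ofReal_exp_mul_lintegral_enorm_le (a ν : ℝ) (g : ℝ → ℝ) {s₀ s : ℝ} (hs : s₀ ≤ s) :
    ENNReal.ofReal (exp (a * s / 2)) * ∫⁻ σ in Ici s, ‖exp (ν * (s - σ)) * g σ‖ₑ ≤
      ∫⁻ σ in Ici s₀,
        expDecayKernel (a / 2 + ν) (σ - s) * ENNReal.ofReal (|g σ| * exp (a * σ / 2)) := by
  rw [← lintegral_const_mul' _ _ ENNReal.ofReal_ne_top]
  refine (setLIntegral_mono' measurableSet_Ici fun σ hσ => le_of_eq ?_).trans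
    (lintegral_mono_set (Ici_subset_Ici.2 hs))
  have hexp : a * s / 2 + ν * (s - σ) = -((a / 2 + ν) * (σ - s)) + a * σ / 2 := by ring
  rw [expDecayKernel, indicator_of_mem (mem_Ici.2 (sub_nonneg.2 (mem_Ici.1 hσ))),
    Real.enorm_eq_ofReal_abs,
    ← ENNReal.ofReal_mul (exp_pos _).le, ← ENNReal.ofReal_mul (exp_pos _).le, abs_mul, abs_exp,
    ← mul_assoc, ← exp_add, hexp, exp_add]
  ring_nf

theorem setLIntegral_expDecayKernel_sub_right_le {β : ℝ} (hβ : 0 < β) (S : Set ℝ) (s : ℝ) :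
    ∫⁻ σ in S, expDecayKernel β (σ - s) ≤ ENNReal.ofReal β⁻¹ :=
  (setLIntegral_le_lintegral S _).trans_eq <| by
    rw [lintegral_sub_right_eq_self (expDecayKernel β) s, lintegral_expDecayKernel hβ]

theorem setLIntegral_expDecayKernel_sub_left_le {β : ℝ} (hβ : 0 < β) (S : Set ℝ) (σ : ℝ) :
    ∫⁻ s in S, expDecayKernel β (σ - s) ≤ ENNReal.ofReal β⁻¹ :=
  (setLIntegral_le_lintegral S _).trans_eq <| by
    rw [lintegral_sub_left_eq_self (expDecayKernel β) σ, lintegral_expDecayKernel hβ]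

theorem lintegral_expDecayKernel_mul_lt_top {β : ℝ} (hβ : 0 < β) (S : Set ℝ) (s : ℝ)
    {φ : ℝ → ℝ≥0∞} (hφ : AEMeasurable φ (volume.restrict S)) (h : ∫⁻ σ in S, φ σ ^ 2 < ∞) :
    ∫⁻ σ in S, expDecayKernel β (σ - s) * φ σ < ∞ := by
  have hk : Measurable fun σ => expDecayKernel β (σ - s) :=
    (measurable_expDecayKernel β).comp (measurable_id.sub_const s)
  have hkφ : ∫⁻ σ in S, expDecayKernel β (σ - s) * φ σ ^ 2 ≤ ∫⁻ σ in S, φ σ ^ 2 :=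
    lintegral_mono fun σ => mul_le_of_le_one_left zero_le (expDecayKernel_le_one hβ.le _)
  have hsq := (sq_lintegral_mul_le _ hk.aemeasurable hφ).trans
    (mul_le_mul' (setLIntegral_expDecayKernel_sub_right_le hβ S s) hkφ)
  simpa using hsq.trans_lt (ENNReal.mul_lt_top ENNReal.ofReal_lt_top h)

theorem ofReal_sq_integral_mul_exp_le (a ν : ℝ) (g : ℝ → ℝ) {s₀ s : ℝ} (hs : s₀ ≤ s) :
    ENNReal.ofReal ((∫ σ in Ici s, exp (ν * (s - σ)) * g σ) ^ 2 * exp (a * s)) ≤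
      (∫⁻ σ in Ici s₀,
        expDecayKernel (a / 2 + ν) (σ - s) * ENNReal.ofReal (|g σ| * exp (a * σ / 2))) ^ 2 := by
  set w := ∫ σ in Ici s, exp (ν * (s - σ)) * g σ
  have hsq : w ^ 2 * exp (a * s) = (exp (a * s / 2) * |w|) ^ 2 := by
    rw [mul_pow, sq_abs, ← exp_nat_mul]; ring_nf
  rw [hsq, ENNReal.ofReal_pow (by positivity), ENNReal.ofReal_mul (exp_pos _).le,
    ← Real.enorm_eq_ofReal_abs]
  gcongr
  exact (mul_le_mul_right (enorm_integral_le_lintegral_enorm _) _).trans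
    (ofReal_exp_mul_lintegral_enorm_le a ν g hs)

/-- Weighted `L²` bound for the solution `w(s) = ∫_s^∞ e^{ν(s-σ)} g(σ) dσ` of `w' = ν w - g`
obtained by integrating from `+∞`, when `m - 2δ + 2ν > 0` (proof of Lemma 2.2 of the paper).
The integral defining `w` converges absolutely for every `s ≥ s₀`. -/
theorem volterra_weighted_bound_from_infinity (m δ ν : ℝ) (h : 0 < m - 2 * δ + 2 * ν)
    (s₀ : ℝ) (g : ℝ → ℝ) (hg : Measurable g)
    (hfin : ∫⁻ s in Ici s₀, ENNReal.ofReal (g s ^ 2 * Real.exp ((m - 2 * δ) * s)) < ⊤) :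
    (∀ s ≥ s₀, IntegrableOn (fun σ => Real.exp (ν * (s - σ)) * g σ) (Ici s)) ∧
      ∫⁻ s in Ici s₀,
          ENNReal.ofReal ((∫ σ in Ici s, Real.exp (ν * (s - σ)) * g σ) ^ 2 *
            Real.exp ((m - 2 * δ) * s)) ≤
        ENNReal.ofReal (4 / (m - 2 * δ + 2 * ν) ^ 2) *
          ∫⁻ s in Ici s₀, ENNReal.ofReal (g s ^ 2 * Real.exp ((m - 2 * δ) * s)) := by
  set β := (m - 2 * δ) / 2 + ν with hβ_def
  have hβ : 0 < β := by linarith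
  set φ : ℝ → ℝ≥0∞ := fun σ => ENNReal.ofReal (|g σ| * exp ((m - 2 * δ) * σ / 2))
  have hφ : Measurable φ := by fun_prop
  have hφ_sq : ∀ σ, φ σ ^ 2 = ENNReal.ofReal (g σ ^ 2 * exp ((m - 2 * δ) * σ)) := fun σ => by
    rw [← ENNReal.ofReal_pow (by positivity), mul_pow, sq_abs, ← exp_nat_mul]; ring_nf
  have hφ_fin : ∫⁻ σ in Ici s₀, φ σ ^ 2 < ∞ := by simpa only [hφ_sq] using hfin
  refine ⟨fun s hs => ⟨by fun_prop, hasFiniteIntegral_iff_enorm.2 ?_⟩, ?_⟩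
  · exact ENNReal.lt_top_of_mul_ne_top_right ((ofReal_exp_mul_lintegral_enorm_le _ ν g hs).trans_lt
      (lintegral_expDecayKernel_mul_lt_top hβ _ s hφ.aemeasurable hφ_fin)).ne
      (ENNReal.ofReal_pos.2 (exp_pos _)).ne'
  calc _ ≤ ∫⁻ s in Ici s₀, (∫⁻ σ in Ici s₀, expDecayKernel β (σ - s) * φ σ) ^ 2 :=
        setLIntegral_mono' measurableSet_Ici fun s hs => ofReal_sq_integral_mul_exp_le _ ν g hs
    _ ≤ ENNReal.ofReal β⁻¹ * ENNReal.ofReal β⁻¹ * ∫⁻ σ in Ici s₀, φ σ ^ 2 :=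
        lintegral_sq_lintegral_mul_le (K := fun s σ => expDecayKernel β (σ - s))
          ((measurable_expDecayKernel β).comp (measurable_snd.sub measurable_fst)) hφ
          (setLIntegral_expDecayKernel_sub_right_le hβ _)
          (setLIntegral_expDecayKernel_sub_left_le hβ _)
    _ = _ := by
        rw [← ENNReal.ofReal_mul (inv_nonneg.2 hβ.le), lintegral_congr hφ_sq, hβ_def]
        congr 2
        field_simp
        ring
end

section
/- Let n ≥ 2 be an integer and a ∈ ℝ, and let F : {x ∈ ℝ^n : |x| ≥ 1} → [0, ∞) be measurable with ∫_{|x| ≥ 1} F(x) |x|^{−2a} dx < ∞. Then liminf_{R → ∞} R^{n−2a} ∫_{S^{n−1}} F(Rω) dω = 0, where dω denotes the standard (n−1)-dimensional measure on the unit sphere S^{n−1} ⊂ ℝ^n. Equivalently, there is a sequence R_i → ∞ along which the sphere integrals ∫_{|x| = R_i} F dσ are o(R_i^{2a−1}). -/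
/-!
In polar coordinates the weighted integral of `F` over `{‖x‖ ≥ 1}` is
`∫_1^∞ sphereFlux R · dR / R`. As `∫^∞ dR / R` diverges, a flux bounded below by some `c > 0`
for all large `R` would make it infinite, so the liminf of the flux vanishes; a sequence
realizing the liminf exists because `atTop` is countably generated.
-/

open MeasureTheory Filter

/-- The weighted sphere integral `R^{n-2a} ∫_{S^{n-1}} F(Rω) dω`, valued in `[0,∞]`,
where `dω` is the standard measure on the unit sphere (the measure `volume.toSphere`). -/
noncomputable def sphereFlux (n : ℕ) (a : ℝ) (F : EuclideanSpace ℝ (Fin n) → ℝ)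
    (R : ℝ) : ENNReal :=
  ENNReal.ofReal (R ^ ((n : ℝ) - 2 * a)) *
    ∫⁻ ω : Metric.sphere (0 : EuclideanSpace ℝ (Fin n)) 1,
      ENNReal.ofReal (F (R • (ω : EuclideanSpace ℝ (Fin n))))
      ∂((volume : Measure (EuclideanSpace ℝ (Fin n))).toSphere)

open Set Metric Module
open scoped ENNReal

section PolarCoordinates

variable {E : Type*} [NormedAddCommGroup E] [NormedSpace ℝ E] [FiniteDimensional ℝ E]
  [MeasurableSpace E] [BorelSpace E] (μ : Measure E) [μ.IsAddHaarMeasure]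

theorem lintegral_eq_lintegral_Ioi_mul_lintegral_toSphere [Nontrivial E] {f : E → ℝ≥0∞}
    (hf : Measurable f) :
    ∫⁻ x, f x ∂μ = ∫⁻ r in Ioi (0 : ℝ),
      ENNReal.ofReal (r ^ (finrank ℝ E - 1)) *
        ∫⁻ ω : sphere (0 : E) 1, f (r • (ω : E)) ∂μ.toSphere := by
  set h := homeomorphUnitSphereProd E
  have hfh : Measurable fun p => f (h.symm p) :=
    hf.comp (continuous_subtype_val.comp h.symm.continuous).measurable
  have hsphere : Measurable fun r : Ioi (0 : ℝ) => ∫⁻ ω, f (h.symm (ω, r)) ∂μ.toSphere :=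
    hfh.lintegral_prod_left'
  calc ∫⁻ x, f x ∂μ = ∫⁻ x : ↥({0}ᶜ : Set E), f x.1 ∂μ.comap Subtype.val := by
        rw [lintegral_subtype_comap (measurableSet_singleton 0).compl, restrict_compl_singleton]
    _ = ∫⁻ p, f (h.symm p) ∂(μ.toSphere.prod (Measure.volumeIoiPow (finrank ℝ E - 1))) := by
        rw [← (μ.measurePreserving_homeomorphUnitSphereProd).lintegral_comp hfh]
        simp only [Homeomorph.symm_apply_apply, h]
    _ = ∫⁻ r, ∫⁻ ω, f (h.symm (ω, r)) ∂μ.toSphere ∂(Measure.volumeIoiPow (finrank ℝ E - 1)) :=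
        lintegral_prod_symm' _ hfh
    _ = ∫⁻ r : Ioi (0 : ℝ), ENNReal.ofReal (r.1 ^ (finrank ℝ E - 1)) *
          ∫⁻ ω : sphere (0 : E) 1, f (r.1 • (ω : E)) ∂μ.toSphere ∂(volume.comap Subtype.val) := by
        rw [Measure.volumeIoiPow, lintegral_withDensity_eq_lintegral_mul _
          (measurable_subtype_coe.pow_const _).ennreal_ofReal hsphere]
        simp only [Pi.mul_apply, h, homeomorphUnitSphereProd_symm_apply_coe]
    _ = _ := lintegral_subtype_comap measurableSet_Ioi fun r : ℝ =>
          ENNReal.ofReal (r ^ (finrank ℝ E - 1)) *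
            ∫⁻ ω : sphere (0 : E) 1, f (r • (ω : E)) ∂μ.toSphere

end PolarCoordinates

theorem setLIntegral_Ici_ofReal_inv_eq_top {M : ℝ} (hM : 0 ≤ M) :
    ∫⁻ t in Ici M, ENNReal.ofReal t⁻¹ = ∞ := by
  by_contra h
  refine not_integrableOn_Ici_inv ((lintegral_ofReal_ne_top_iff_integrable
    measurable_inv.aestronglyMeasurable ?_).1 h)
  filter_upwards [ae_restrict_mem measurableSet_Ici] with t ht
  exact inv_nonneg.2 (hM.trans ht)

theorem liminf_eq_zero_of_setLIntegral_mul_inv_lt_top {g : ℝ → ℝ≥0∞} {M : ℝ}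
    (hg : ∫⁻ t in Ici M, g t * ENNReal.ofReal t⁻¹ < ∞) : liminf g atTop = 0 := by
  by_contra hne
  obtain ⟨c, hc0, hc⟩ := exists_between (pos_iff_ne_zero.2 hne)
  obtain ⟨N, hN⟩ := eventually_atTop.1 (eventually_lt_of_lt_liminf hc)
  set N' := max (max M N) 0
  have hdiv : ∞ ≤ ∫⁻ t in Ici M, g t * ENNReal.ofReal t⁻¹ := calc
    ∞ = ∫⁻ t in Ici N', c * ENNReal.ofReal t⁻¹ := by
      rw [lintegral_const_mul' _ _ hc.ne_top,
        setLIntegral_Ici_ofReal_inv_eq_top (le_max_right _ _), ENNReal.mul_top hc0.ne']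
    _ ≤ ∫⁻ t in Ici N', g t * ENNReal.ofReal t⁻¹ :=
      setLIntegral_mono' measurableSet_Ici fun t ht =>
        mul_le_mul_left (hN t ((le_max_right _ _).trans ((le_max_left _ _).trans ht))).le _
    _ ≤ ∫⁻ t in Ici M, g t * ENNReal.ofReal t⁻¹ :=
      lintegral_mono_set (Ici_subset_Ici.2 ((le_max_left _ _).trans (le_max_left _ _)))
  exact (hdiv.trans_lt hg).false

section SphereFlux

variable {n : ℕ} {a : ℝ} {F : EuclideanSpace ℝ (Fin n) → ℝ}

theorem ofReal_pow_mul_lintegral_sphere_indicator_eq (hn : 1 ≤ n) {t : ℝ} (ht : 0 < t) :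
    ENNReal.ofReal (t ^ (n - 1)) *
      ∫⁻ ω : sphere (0 : EuclideanSpace ℝ (Fin n)) 1,
        {x | 1 ≤ ‖x‖}.indicator (fun x => ENNReal.ofReal (F x * ‖x‖ ^ (-(2 * a))))
          (t • (ω : EuclideanSpace ℝ (Fin n))) ∂volume.toSphere =
      (Ici 1).indicator (fun t => sphereFlux n a F t * ENNReal.ofReal t⁻¹) t := by
  have hnorm (ω : sphere (0 : EuclideanSpace ℝ (Fin n)) 1) :
      ‖t • (ω : EuclideanSpace ℝ (Fin n))‖ = t := by
    rw [norm_smul_of_nonneg ht.le, norm_eq_of_mem_sphere ω, mul_one]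
  by_cases ht1 : 1 ≤ t
  · have hpow : t ^ (n - 1) * t ^ (-(2 * a)) = t ^ ((n : ℝ) - 2 * a) * t⁻¹ := by
      rw [← Real.rpow_natCast, Nat.cast_sub hn, ← Real.rpow_neg_one, ← Real.rpow_add ht,
        ← Real.rpow_add ht]
      ring_nf
    simp only [indicator_of_mem (show t ∈ Ici 1 from ht1), mem_ofPred_eq, hnorm, ht1,
      indicator_of_mem]
    simp_rw [ENNReal.ofReal_mul' (Real.rpow_nonneg ht.le _)]
    rw [lintegral_mul_const' _ _ ENNReal.ofReal_ne_top, sphereFlux, mul_left_comm, mul_assoc,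
      ← ENNReal.ofReal_mul (by positivity), hpow,
      ENNReal.ofReal_mul (Real.rpow_nonneg ht.le _)]
    ring
  · have hzero (ω : sphere (0 : EuclideanSpace ℝ (Fin n)) 1) :
        {x | 1 ≤ ‖x‖}.indicator (fun x => ENNReal.ofReal (F x * ‖x‖ ^ (-(2 * a))))
          (t • (ω : EuclideanSpace ℝ (Fin n))) = 0 :=
      indicator_of_notMem (by simp [hnorm, ht1]) _
    simp [hzero, ht1]

theorem setLIntegral_Ici_sphereFlux_mul_inv (hn : 1 ≤ n) (hF : Measurable F) :
    ∫⁻ t in Ici 1, sphereFlux n a F t * ENNReal.ofReal t⁻¹ =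
      ∫⁻ x in {x | 1 ≤ ‖x‖}, ENNReal.ofReal (F x * ‖x‖ ^ (-(2 * a))) := by
  have : Nontrivial (EuclideanSpace ℝ (Fin n)) := by
    have : Nonempty (Fin n) := ⟨⟨0, hn⟩⟩
    infer_instance
  have hset : MeasurableSet {x : EuclideanSpace ℝ (Fin n) | 1 ≤ ‖x‖} :=
    measurableSet_le measurable_const measurable_norm
  have hmeas : Measurable ({x | 1 ≤ ‖x‖}.indicator
      fun x : EuclideanSpace ℝ (Fin n) => ENNReal.ofReal (F x * ‖x‖ ^ (-(2 * a)))) :=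
    (hF.mul (measurable_norm.pow_const _)).ennreal_ofReal.indicator hset
  rw [← lintegral_indicator hset, lintegral_eq_lintegral_Ioi_mul_lintegral_toSphere volume hmeas,
    finrank_euclideanSpace_fin, setLIntegral_congr_fun measurableSet_Ioi
      fun t ht => ofReal_pow_mul_lintegral_sphere_indicator_eq hn ht,
    lintegral_indicator measurableSet_Ici, Measure.restrict_restrict measurableSet_Ici,
    inter_eq_left.2 (Ici_subset_Ioi.2 one_pos)]

end SphereFlux

theorem flux_liminf_zero_general (n : ℕ) (hn : 2 ≤ n) (a : ℝ)
    (F : EuclideanSpace ℝ (Fin n) → ℝ) (hF : Measurable F)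
    (hfin : ∫⁻ x in {x : EuclideanSpace ℝ (Fin n) | 1 ≤ ‖x‖},
      ENNReal.ofReal (F x * ‖x‖ ^ (-(2 * a))) < ⊤) :
    liminf (sphereFlux n a F) atTop = 0 ∧
      ∃ R : ℕ → ℝ, Tendsto R atTop atTop ∧
        Tendsto (fun i => sphereFlux n a F (R i)) atTop (nhds 0) := by
  rw [← setLIntegral_Ici_sphereFlux_mul_inv (by omega) hF] at hfin
  have hliminf := liminf_eq_zero_of_setLIntegral_mul_inv_lt_top hfin
  obtain ⟨R, hflux, hR⟩ := exists_seq_tendsto_liminf (u := sphereFlux n a F) (f := atTop)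
  exact ⟨hliminf, R, hR, hliminf ▸ hflux⟩

/-- **Pigeonhole for weighted flux integrals** (core of Lemma 3.2 of the paper): if
`F ≥ 0` satisfies `∫_{|x| ≥ 1} F(x)|x|^{-2a} dx < ∞`, then
`liminf_{R → ∞} R^{n-2a} ∫_{S^{n-1}} F(Rω) dω = 0`; equivalently there is a sequence
`R_i → ∞` along which these weighted sphere integrals tend to `0`. -/
theorem flux_liminf_zero (n : ℕ) (hn : 2 ≤ n) (a : ℝ)
    (F : EuclideanSpace ℝ (Fin n) → ℝ) (hF : Measurable F) (hF0 : ∀ x, 0 ≤ F x)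
    (hfin : ∫⁻ x in {x : EuclideanSpace ℝ (Fin n) | 1 ≤ ‖x‖},
      ENNReal.ofReal (F x * ‖x‖ ^ (-(2 * a))) < ⊤) :
    liminf (sphereFlux n a F) atTop = 0 ∧
      ∃ R : ℕ → ℝ, Tendsto R atTop atTop ∧
        Tendsto (fun i => sphereFlux n a F (R i)) atTop (nhds 0) :=
  flux_liminf_zero_general n hn a F hF hfin
end
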